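/- Let n ≥ 1, N = 2n+1, and let A_{−n} ⊆ A_{−n+1} ⊆ … ⊆ A_{−1} be complex subspaces of ℂ^N, each isotropic for the symmetric bilinear form b(x,y) = Σ_j x_j y_j (equivalently A_{−1} ⊆ (conj A_{−1})^⊥). In the Laurent polynomial module H = ℂ[λ,λ^{−1}]^N with H_+ = ℂ[λ]^N, define the ℂ-subspaces W_ξ = Σ_{i=1}^{n} λ^{−i}A_{−i} + Σ_{i=0}^{n−1} λ^{i}(conj A_{−i−1})^⊥ + λ^n H_+ and W_{ξ_1} = Σ_{i=1}^{n−1} λ^{−i}A_{−i} + Σ_{i=0}^{n−2} λ^{i}(conj A_{−i−1})^⊥ + λ^{n−1}H_+ (all sums are sums of ℂ-subspaces of H). Then W_{ξ_1} = (W_ξ ∩ λ^{−n+1}H_+) + λ^{n−1}H_+. -/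

import Mathlib

/-!
The Grassmannian model: `H = ℂ[λ,λ⁻¹]^N` is modelled as finitely supported
families `ℤ →₀ ℂ^N` (the coefficient of `λ^m` being the value at `m`), with
`ℂ^N = EuclideanSpace ℂ (Fin N)`.
-/

/-- The subspace `λ^k V ⊆ H` for a subspace `V ⊆ ℂ^N`. -/
noncomputable def atDeg (N : ℕ) (k : ℤ) (V : Submodule ℂ (EuclideanSpace ℂ (Fin N))) :
    Submodule ℂ (ℤ →₀ EuclideanSpace ℂ (Fin N)) :=
  V.map (Finsupp.lsingle k)

/-- The subspace `λ^d H_+ ⊆ H`: elements with no coefficients below degree `d`. -/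
noncomputable def shiftedHplus (N : ℕ) (d : ℤ) :
    Submodule ℂ (ℤ →₀ EuclideanSpace ℂ (Fin N)) where
  carrier := {f | ∀ m : ℤ, m < d → f m = 0}
  zero_mem' := by intro m _; simp
  add_mem' := by
    intro f g hf hg m hm
    simp [Finsupp.add_apply, hf m hm, hg m hm]
  smul_mem' := by
    intro c f hf m hm
    simp [Finsupp.smul_apply, hf m hm]

/-- Entrywise complex conjugation of a subspace `A ⊆ ℂ^N` (`conj A`). -/
noncomputable def conjSub (N : ℕ) (A : Submodule ℂ (EuclideanSpace ℂ (Fin N))) :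
    Submodule ℂ (EuclideanSpace ℂ (Fin N)) where
  carrier := (fun v : EuclideanSpace ℂ (Fin N) =>
    (WithLp.toLp 2 (fun j => (starRingEnd ℂ) (v j)) : EuclideanSpace ℂ (Fin N))) '' A
  zero_mem' := ⟨0, A.zero_mem, by ext j; simp⟩
  add_mem' := by
    rintro x y ⟨a, ha, rfl⟩ ⟨b, hb, rfl⟩
    exact ⟨a + b, A.add_mem ha hb, by ext j; simp⟩
  smul_mem' := by
    rintro c x ⟨a, ha, rfl⟩
    exact ⟨(starRingEnd ℂ) c • a, A.smul_mem _ ha, by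
      ext j
      simp [mul_comm]⟩

/-!
Every subspace in the identity is homogeneous: it consists of the Laurent polynomials whose
coefficient of `λ^m` lies in a subspace of `ℂ^N` prescribed for each degree `m`, and sums and
intersections of homogeneous subspaces are computed degree by degree. Both sides are therefore
determined by their coefficient subspaces, and these agree in every degree: intersecting with
`λ^{-n+1}H_+` removes the degree `-n` part `A_{-n}`, and adding `λ^{n-1}H_+` fills degree `n-1`.
-/

namespace Finsupp

variable {ι R M : Type*} [Semiring R] [AddCommMonoid M] [Module R M]

noncomputable def degreewise (F : ι → Submodule R M) : Submodule R (ι →₀ M) :=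
  (Submodule.pi Set.univ F).comap (lcoeFun (R := R))

theorem mem_degreewise {F : ι → Submodule R M} {f : ι →₀ M} :
    f ∈ degreewise F ↔ ∀ i, f i ∈ F i := by
  simp [degreewise, Submodule.mem_pi]

theorem degreewise_mono {F G : ι → Submodule R M} (h : F ≤ G) : degreewise F ≤ degreewise G :=
  fun _ hf => mem_degreewise.2 fun i => h i (mem_degreewise.1 hf i)

theorem single_mem_degreewise {F : ι → Submodule R M} {i : ι} {v : M} (hv : v ∈ F i) :
    single i v ∈ degreewise F := by
  classical
  refine mem_degreewise.2 fun j => ?_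
  rw [single_apply]
  split_ifs with hij
  · exact hij ▸ hv
  · exact (F j).zero_mem

theorem map_lsingle_le_degreewise {F : ι → Submodule R M} {i : ι} {V : Submodule R M}
    (h : V ≤ F i) : V.map (lsingle i) ≤ degreewise F :=
  Submodule.map_le_iff_le_comap.2 fun _ hv => single_mem_degreewise (h hv)

theorem degreewise_le_iff {F : ι → Submodule R M} {W : Submodule R (ι →₀ M)} :
    degreewise F ≤ W ↔ ∀ i, ∀ v ∈ F i, single i v ∈ W := by
  refine ⟨fun h i v hv => h (single_mem_degreewise hv), fun h f hf => ?_⟩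
  induction f using Finsupp.induction with
  | zero => exact W.zero_mem
  | single_add i v g hi hv ih =>
    have hgi : g i = 0 := notMem_support_iff.1 hi
    have hg : g ∈ degreewise F := mem_degreewise.2 fun j => by
      rcases eq_or_ne j i with rfl | hj
      · rw [hgi]; exact (F j).zero_mem
      · simpa [single_eq_of_ne' hj.symm] using mem_degreewise.1 hf j
    refine W.add_mem (h i v ?_) (ih hg)
    simpa [hgi] using mem_degreewise.1 hf i

theorem degreewise_inf (F G : ι → Submodule R M) :
    degreewise (F ⊓ G) = degreewise F ⊓ degreewise G := by
  ext f
  simp only [Submodule.mem_inf, mem_degreewise, Pi.inf_apply, forall_and]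

theorem degreewise_sup (F G : ι → Submodule R M) :
    degreewise (F ⊔ G) = degreewise F ⊔ degreewise G := by
  refine le_antisymm (degreewise_le_iff.2 fun i v hv => ?_)
    (sup_le (degreewise_mono le_sup_left) (degreewise_mono le_sup_right))
  obtain ⟨a, ha, b, hb, rfl⟩ := Submodule.mem_sup.1 hv
  rw [single_add]
  exact Submodule.add_mem_sup (single_mem_degreewise ha) (single_mem_degreewise hb)

end Finsupp

open Finsupp

section Coefficients

variable {R M : Type*} [Semiring R] [AddCommMonoid M] [Module R M]

/-- The coefficient of `λ^m` in `Σ_{i=1}^n λ^{-i} A i + Σ_{i=0}^{n-1} λ^i B i + λ^d H_+`. -/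
def coeffSpace (n : ℕ) (d : ℤ) (A B : ℕ → Submodule R M) (m : ℤ) : Submodule R M :=
  if d ≤ m then ⊤
  else if m < -n then ⊥
  else if m < 0 then A (-m).toNat
  else if m < n then B m.toNat
  else ⊥

theorem coeffSpace_pred (n : ℕ) (A B : ℕ → Submodule R M) (m : ℤ) :
    coeffSpace (n - 1) ((n : ℤ) - 1) A B m =
      coeffSpace n n A B m ⊓ (if -(n : ℤ) + 1 ≤ m then ⊤ else ⊥) ⊔
        (if (n : ℤ) - 1 ≤ m then ⊤ else ⊥) := by
  unfold coeffSpace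
  split_ifs <;> first | omega | simp

end Coefficients

section LaurentModel

variable {N : ℕ}

theorem shiftedHplus_eq_degreewise (d : ℤ) :
    shiftedHplus N d = degreewise fun m => if d ≤ m then ⊤ else ⊥ := by
  ext f
  simp only [mem_degreewise]
  refine forall_congr' fun m => ?_
  split_ifs
  · simp only [Submodule.mem_top, iff_true]
    omega
  · rw [Submodule.mem_bot]
    exact ⟨fun h => h (by omega), fun h _ => h⟩

theorem single_mem_iSup_atDeg {s : Finset ℕ} {k : ℕ → ℤ}
    {V : ℕ → Submodule ℂ (EuclideanSpace ℂ (Fin N))} {i : ℕ} (hi : i ∈ s) {m : ℤ} (hm : k i = m)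
    {v : EuclideanSpace ℂ (Fin N)} (hv : v ∈ V i) :
    single m v ∈ ⨆ i ∈ s, atDeg N (k i) (V i) :=
  le_iSup₂ (f := fun i (_ : i ∈ s) => atDeg N (k i) (V i)) i hi
    (hm ▸ Submodule.mem_map_of_mem hv)

theorem laurentModel_eq_degreewise (n : ℕ) (d : ℤ)
    (A B : ℕ → Submodule ℂ (EuclideanSpace ℂ (Fin N))) :
    (⨆ i ∈ Finset.Icc 1 n, atDeg N (-(i : ℤ)) (A i)) ⊔
        (⨆ i ∈ Finset.range n, atDeg N (i : ℤ) (B i)) ⊔ shiftedHplus N d =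
      degreewise (coeffSpace n d A B) := by
  apply le_antisymm
  · refine sup_le (sup_le (iSup₂_le fun i hi => ?_) (iSup₂_le fun i hi => ?_)) ?_
    · rw [Finset.mem_Icc] at hi
      refine map_lsingle_le_degreewise ?_
      unfold coeffSpace
      split_ifs <;> first | omega | exact le_top | simp
    · rw [Finset.mem_range] at hi
      refine map_lsingle_le_degreewise ?_
      unfold coeffSpace
      split_ifs <;> first | omega | exact le_top | simp
    · rw [shiftedHplus_eq_degreewise]
      refine degreewise_mono fun m => ?_
      unfold coeffSpace
      split_ifs <;> first | exact le_top | exact bot_le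
  · refine degreewise_le_iff.2 fun m v hv => ?_
    unfold coeffSpace at hv
    split_ifs at hv
    · exact Submodule.mem_sup_right
        (show single m v ∈ shiftedHplus N d from fun k hk => single_eq_of_ne (by omega))
    · simp [(Submodule.mem_bot ℂ).1 hv]
    · refine Submodule.mem_sup_left (Submodule.mem_sup_left ?_)
      exact single_mem_iSup_atDeg (k := fun i : ℕ => -(i : ℤ)) (Finset.mem_Icc.2 (by omega))
        (by omega) hv
    · refine Submodule.mem_sup_left (Submodule.mem_sup_right ?_)
      exact single_mem_iSup_atDeg (k := fun i : ℕ => (i : ℤ)) (Finset.mem_range.2 (by omega))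
        (by omega) hv
    · simp [(Submodule.mem_bot ℂ).1 hv]

end LaurentModel

theorem grassmannian_factorization_so_odd_general (n : ℕ) (N : ℕ)
    (A : ℕ → Submodule ℂ (EuclideanSpace ℂ (Fin N))) :
    ((⨆ i ∈ Finset.Icc 1 (n - 1), atDeg N (-(i : ℤ)) (A i)) ⊔
        (⨆ i ∈ Finset.range (n - 1), atDeg N (i : ℤ) ((conjSub N (A (i + 1)))ᗮ)) ⊔
        shiftedHplus N ((n : ℤ) - 1)) =
      ((((⨆ i ∈ Finset.Icc 1 n, atDeg N (-(i : ℤ)) (A i)) ⊔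
          (⨆ i ∈ Finset.range n, atDeg N (i : ℤ) ((conjSub N (A (i + 1)))ᗮ)) ⊔
          shiftedHplus N (n : ℤ)) ⊓ shiftedHplus N (-(n : ℤ) + 1)) ⊔
        shiftedHplus N ((n : ℤ) - 1)) := by
  set B : ℕ → Submodule ℂ (EuclideanSpace ℂ (Fin N)) := fun i => (conjSub N (A (i + 1)))ᗮ
  rw [laurentModel_eq_degreewise (n - 1) _ A B, laurentModel_eq_degreewise n _ A B,
    shiftedHplus_eq_degreewise, shiftedHplus_eq_degreewise, ← degreewise_inf, ← degreewise_sup]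
  exact congrArg degreewise (funext (coeffSpace_pred n A B))

/-- With `N = 2n+1` and a flag `A_{-n} ⊆ ⋯ ⊆ A_{-1}` of isotropic
subspaces of `ℂ^N`, setting
`W_ξ = Σ_{i=1}^n λ^{-i}A_{-i} + Σ_{i=0}^{n-1} λ^i (conj A_{-i-1})^⊥ + λ^n H_+` and
`W_{ξ₁} = Σ_{i=1}^{n-1} λ^{-i}A_{-i} + Σ_{i=0}^{n-2} λ^i (conj A_{-i-1})^⊥ + λ^{n-1} H_+`,
one has `W_{ξ₁} = (W_ξ ∩ λ^{-n+1}H_+) + λ^{n-1}H_+`. -/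
theorem grassmannian_factorization_so_odd (n : ℕ) (hn : 1 ≤ n) (N : ℕ)
    (hN : N = 2 * n + 1)
    (A : ℕ → Submodule ℂ (EuclideanSpace ℂ (Fin N)))
    (hchain : ∀ i : ℕ, 1 ≤ i → i + 1 ≤ n → A (i + 1) ≤ A i)
    (hiso : ∀ i ∈ Finset.Icc 1 n, ∀ x ∈ A i, ∀ y ∈ A i, ∑ j, x j * y j = 0) :
    ((⨆ i ∈ Finset.Icc 1 (n - 1), atDeg N (-(i : ℤ)) (A i)) ⊔
        (⨆ i ∈ Finset.range (n - 1), atDeg N (i : ℤ) ((conjSub N (A (i + 1)))ᗮ)) ⊔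
        shiftedHplus N ((n : ℤ) - 1)) =
      ((((⨆ i ∈ Finset.Icc 1 n, atDeg N (-(i : ℤ)) (A i)) ⊔
          (⨆ i ∈ Finset.range n, atDeg N (i : ℤ) ((conjSub N (A (i + 1)))ᗮ)) ⊔
          shiftedHplus N (n : ℤ)) ⊓ shiftedHplus N (-(n : ℤ) + 1)) ⊔
        shiftedHplus N ((n : ℤ) - 1)) :=
  grassmannian_factorization_so_odd_general n N A
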